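/- arXiv:2510.04926 — 3 statements merged into one kernel-verified Lean document; each statement's English description precedes it below -/
import Mathlib

section
/- Assume Assumption 1 (continuity) and fix β ∈ (0,K). For any minimizer (λ*,γ*) of H over Δ, the β-specific oracle Γ*_β(x,s) := {k ∈ [K] : p_k(x,s) ≥ λ* + γ*_{k,s}/π_s} satisfies the Demographic Parity constraint: for every k ∈ [K] and s ∈ 𝒮, ℙ(k ∈ Γ*_β(X,S) | S = s) = ℙ(k ∈ Γ*_β(X,S)). -/
open MeasureTheory Set Filter
open Topology

noncomputable section

section Defs

variable {𝒳 𝒮 : Type*} [MeasurableSpace 𝒳] [MeasurableSpace 𝒮] {K : ℕ}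

/-- `π_s := ℙ(S = s)`. -/
def probS (μ : Measure (𝒳 × 𝒮 × Fin K)) (s : 𝒮) : ℝ :=
  (μ {ω | ω.2.1 = s}).toReal

/-- `ℙ(A | S = s) := ℙ(A ∩ {S = s}) / π_s`. -/
def condProb (μ : Measure (𝒳 × 𝒮 × Fin K)) (A : Set (𝒳 × 𝒮 × Fin K)) (s : 𝒮) : ℝ :=
  (μ (A ∩ {ω | ω.2.1 = s})).toReal / probS μ s

/-- Conditional expectation `E[f(X,S,Y) | S = s]`. -/
def condMean (μ : Measure (𝒳 × 𝒮 × Fin K)) (f : 𝒳 × 𝒮 × Fin K → ℝ) (s : 𝒮) : ℝ :=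
  (∫ ω in {ω : 𝒳 × 𝒮 × Fin K | ω.2.1 = s}, f ω ∂μ) / probS μ s

/-- The event `{k ∈ Γ(X,S)}`. -/
def memEvent (Γ : 𝒳 → 𝒮 → Set (Fin K)) (k : Fin K) : Set (𝒳 × 𝒮 × Fin K) :=
  {ω | k ∈ Γ ω.1 ω.2.1}

/-- A set-valued classifier: each membership set is measurable. -/
def IsClassifier (Γ : 𝒳 → 𝒮 → Set (Fin K)) : Prop :=
  ∀ k : Fin K, MeasurableSet {q : 𝒳 × 𝒮 | k ∈ Γ q.1 q.2}

/-- Risk `R(Γ) := ℙ(Y ∉ Γ(X,S))`. -/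
def risk (μ : Measure (𝒳 × 𝒮 × Fin K)) (Γ : 𝒳 → 𝒮 → Set (Fin K)) : ℝ :=
  (μ {ω | ω.2.2 ∉ Γ ω.1 ω.2.1}).toReal

/-- Expected size `𝒯(Γ) := E[|Γ(X,S)|]`. -/
def expSize (μ : Measure (𝒳 × 𝒮 × Fin K)) (Γ : 𝒳 → 𝒮 → Set (Fin K)) : ℝ :=
  ∫ ω, ((Γ ω.1 ω.2.1).ncard : ℝ) ∂μ

/-- Demographic parity: `ℙ(k ∈ Γ(X,S) | S = s) = ℙ(k ∈ Γ(X,S))` for all `k, s`. -/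
def DPfair (μ : Measure (𝒳 × 𝒮 × Fin K)) (Γ : 𝒳 → 𝒮 → Set (Fin K)) : Prop :=
  ∀ (k : Fin K) (s : 𝒮), condProb μ (memEvent Γ k) s = (μ (memEvent Γ k)).toReal

/-- Unfairness measure `𝒰(Γ)`. -/
def unfairness (μ : Measure (𝒳 × 𝒮 × Fin K)) (Γ : 𝒳 → 𝒮 → Set (Fin K)) : ℝ :=
  ⨆ k : Fin K, ⨆ s : 𝒮, ⨆ s' : 𝒮,
    |condProb μ (memEvent Γ k) s - condProb μ (memEvent Γ k) s'|

/-- Conditional cdf `F_{k,s}(t) := ℙ(p_k(X,S) ≤ t | S = s)`. -/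
def Fks (μ : Measure (𝒳 × 𝒮 × Fin K)) (p : Fin K → 𝒳 → 𝒮 → ℝ) (k : Fin K) (s : 𝒮) (t : ℝ) : ℝ :=
  condProb μ {ω | p k ω.1 ω.2.1 ≤ t} s

/-- cdf `F_k(t) := ℙ(p_k(X,S) ≤ t)`. -/
def Fk (μ : Measure (𝒳 × 𝒮 × Fin K)) (p : Fin K → 𝒳 → 𝒮 → ℝ) (k : Fin K) (t : ℝ) : ℝ :=
  (μ {ω | p k ω.1 ω.2.1 ≤ t}).toReal

/-- `G(t) := Σ_k (1 - F_k(t))`. -/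
def Gfun (μ : Measure (𝒳 × 𝒮 × Fin K)) (p : Fin K → 𝒳 → 𝒮 → ℝ) (t : ℝ) : ℝ :=
  ∑ k : Fin K, (1 - Fk μ p k t)

/-- Assumption 1 (continuity of all the conditional cdfs `F_{k,s}`). -/
def Assumption1 (μ : Measure (𝒳 × 𝒮 × Fin K)) (p : Fin K → 𝒳 → 𝒮 → ℝ) : Prop :=
  ∀ (k : Fin K) (s : 𝒮), Continuous (fun t => Fks μ p k s t)

/-- Thresholding (oracle) classifier `{k : p_k(x,s) ≥ λ + γ_{k,s}/π_s}`. -/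
def oracle (μ : Measure (𝒳 × 𝒮 × Fin K)) (p : Fin K → 𝒳 → 𝒮 → ℝ)
    (lam : ℝ) (γ : Fin K → 𝒮 → ℝ) : 𝒳 → 𝒮 → Set (Fin K) :=
  fun x s => {k | lam + γ k s / probS μ s ≤ p k x s}

/-- The objective `H(λ,γ)`. -/
def Hfun [Fintype 𝒮] (μ : Measure (𝒳 × 𝒮 × Fin K)) (p : Fin K → 𝒳 → 𝒮 → ℝ) (β : ℝ)
    (lam : ℝ) (γ : Fin K → 𝒮 → ℝ) : ℝ :=
  (∑ k : Fin K, ∑ s : 𝒮,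
      condMean μ (fun ω => max (probS μ s * (p k ω.1 ω.2.1 - lam) - γ k s) 0) s) + lam * β

/-- Lagrangian risk `R_{λ,γ}(Γ)`. -/
def lagRisk [Fintype 𝒮] (μ : Measure (𝒳 × 𝒮 × Fin K)) (β lam : ℝ) (γ : Fin K → 𝒮 → ℝ)
    (Γ : 𝒳 → 𝒮 → Set (Fin K)) : ℝ :=
  risk μ Γ + lam * (expSize μ Γ - β) +
    ∑ k : Fin K, ∑ s : 𝒮, γ k s * condProb μ (memEvent Γ k) s

end Defs

/-- Generalized inverse `h⁻¹(u) := inf {t | h t ≤ u}` of a nonincreasing function. -/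
def ginv (h : ℝ → ℝ) (u : ℝ) : ℝ := sInf {t | h t ≤ u}

/-- The constraint set `Δ`. -/
def Δset (K : ℕ) (𝒮 : Type*) [Fintype 𝒮] : Set (ℝ × (Fin K → 𝒮 → ℝ)) :=
  {q | 0 ≤ q.1 ∧ ∀ k : Fin K, ∑ s : 𝒮, q.2 k s = 0}


section Aux
open Topology
variable {𝒳 𝒮 : Type*} [MeasurableSpace 𝒳] [MeasurableSpace 𝒮] {K : ℕ}

lemma measSlice [MeasurableSingletonClass 𝒮] (s : 𝒮) :
    MeasurableSet {ω : 𝒳 × 𝒮 × Fin K | ω.2.1 = s} := by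
  have : {ω : 𝒳 × 𝒮 × Fin K | ω.2.1 = s} = (fun ω : 𝒳 × 𝒮 × Fin K => ω.2.1) ⁻¹' {s} := by
    ext ω; simp
  rw [this]
  exact (measurable_fst.comp measurable_snd) (measurableSet_singleton s)

lemma measP {p : Fin K → 𝒳 → 𝒮 → ℝ} (hpmeas : ∀ k, Measurable fun q : 𝒳 × 𝒮 => p k q.1 q.2)
    (k : Fin K) : Measurable (fun ω : 𝒳 × 𝒮 × Fin K => p k ω.1 ω.2.1) :=
  (hpmeas k).comp (measurable_fst.prodMk (measurable_fst.comp measurable_snd))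

lemma noatom [MeasurableSingletonClass 𝒮] (μ : Measure (𝒳 × 𝒮 × Fin K)) [IsProbabilityMeasure μ]
    {p : Fin K → 𝒳 → 𝒮 → ℝ} (hpmeas : ∀ k, Measurable fun q : 𝒳 × 𝒮 => p k q.1 q.2)
    {s : 𝒮} (hπ : 0 < probS μ s) (k : Fin K)
    (hc : Continuous (fun t => Fks μ p k s t)) (t : ℝ) :
    μ ({ω | p k ω.1 ω.2.1 = t} ∩ {ω | ω.2.1 = s}) = 0 := by
  set Es := {ω : 𝒳 × 𝒮 × Fin K | ω.2.1 = s} with hEs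
  set m : ℝ → ENNReal := fun u => μ ({ω | p k ω.1 ω.2.1 ≤ u} ∩ Es) with hm
  have hmfin : ∀ u, m u ≠ ⊤ := fun u => measure_ne_top μ _
  have hcont : Continuous fun u => (m u).toReal := by
    have : (fun u => (m u).toReal) = fun u => Fks μ p k s u * probS μ s := by
      funext u
      simp only [Fks, condProb]
      field_simp
      rfl
    rw [this]
    exact hc.mul continuous_const
  set u : ℕ → ℝ := fun n => t - 1/(n+1) with hu
  have hu_tendsto : Tendsto u atTop (𝓝 t) := by
    have : Tendsto (fun n : ℕ => 1/((n:ℝ)+1)) atTop (𝓝 0) := tendsto_one_div_add_atTop_nhds_zero_nat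
    have h2 := (tendsto_const_nhds (x := t)).sub this
    simpa [hu, one_div] using h2
  set A : ℕ → Set (𝒳 × 𝒮 × Fin K) := fun n => {ω | p k ω.1 ω.2.1 ≤ u n} ∩ Es with hA
  have hmono : Monotone A := by
    intro a b hab
    apply inter_subset_inter_left
    intro ω hω
    simp only [mem_setOf_eq] at hω ⊢
    refine le_trans hω ?_
    simp only [hu]
    have hba : (a:ℝ) ≤ (b:ℝ) := Nat.cast_le.mpr hab
    have : 1/((b:ℝ)+1) ≤ 1/((a:ℝ)+1) := by
      apply one_div_le_one_div_of_le
      · positivity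
      · linarith
    linarith
  have hUnion : (⋃ n, A n) = {ω | p k ω.1 ω.2.1 < t} ∩ Es := by
    ext ω
    simp only [mem_iUnion, hA, mem_inter_iff, mem_setOf_eq]
    constructor
    · rintro ⟨n, h1, h2⟩
      refine ⟨lt_of_le_of_lt h1 ?_, h2⟩
      simp only [hu]
      have : 0 < 1/((n:ℝ)+1) := by positivity
      linarith
    · rintro ⟨h1, h2⟩
      obtain ⟨n, hn⟩ := exists_nat_one_div_lt (by linarith : 0 < t - p k ω.1 ω.2.1)
      exact ⟨n, by simp only [hu]; linarith, h2⟩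
  have hT : Tendsto (fun n => m (u n)) atTop (𝓝 (μ ({ω | p k ω.1 ω.2.1 < t} ∩ Es))) := by
    have := tendsto_measure_iUnion_atTop (μ := μ) hmono
    rwa [hUnion] at this
  have hT2 : Tendsto (fun n => (m (u n)).toReal) atTop
      (𝓝 ((μ ({ω | p k ω.1 ω.2.1 < t} ∩ Es)).toReal)) :=
    (ENNReal.tendsto_toReal (measure_ne_top μ _)).comp hT
  have hT3 : Tendsto (fun n => (m (u n)).toReal) atTop (𝓝 ((m t).toReal)) :=
    (hcont.tendsto t).comp hu_tendsto
  have heq : (μ ({ω | p k ω.1 ω.2.1 < t} ∩ Es)).toReal = (m t).toReal :=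
    tendsto_nhds_unique hT2 hT3
  have hsplit : m t = μ ({ω | p k ω.1 ω.2.1 < t} ∩ Es) + μ ({ω | p k ω.1 ω.2.1 = t} ∩ Es) := by
    show μ ({ω | p k ω.1 ω.2.1 ≤ t} ∩ Es) = _
    have hset : {ω : 𝒳 × 𝒮 × Fin K | p k ω.1 ω.2.1 ≤ t} ∩ Es
        = ({ω | p k ω.1 ω.2.1 < t} ∩ Es) ∪ ({ω | p k ω.1 ω.2.1 = t} ∩ Es) := by
      ext ω; simp only [mem_inter_iff, mem_setOf_eq, mem_union]
      constructor
      · rintro ⟨h1, h2⟩; rcases lt_or_eq_of_le h1 with h | h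
        · exact Or.inl ⟨h, h2⟩
        · exact Or.inr ⟨h, h2⟩
      · rintro (⟨h1, h2⟩ | ⟨h1, h2⟩); exacts [⟨le_of_lt h1, h2⟩, ⟨le_of_eq h1, h2⟩]
    rw [hset]
    apply measure_union
    · intro B hB1 hB2 ω hω
      have h1 := hB1 hω; have h2 := hB2 hω
      simp only [mem_inter_iff, mem_setOf_eq] at h1 h2
      exact absurd h2.1 (ne_of_lt h1.1)
    · exact (((measP hpmeas k) (measurableSet_singleton t)).inter (measSlice s))
  have h1 : (m t).toReal = (μ ({ω | p k ω.1 ω.2.1 < t} ∩ Es)).toReal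
      + (μ ({ω | p k ω.1 ω.2.1 = t} ∩ Es)).toReal := by
    rw [hsplit, ENNReal.toReal_add (measure_ne_top μ _) (measure_ne_top μ _)]
  have : (μ ({ω | p k ω.1 ω.2.1 = t} ∩ Es)).toReal = 0 := by linarith
  exact (ENNReal.toReal_eq_zero_iff _).mp this |>.resolve_right (measure_ne_top μ _)

lemma pt_upper {v t t' : ℝ} (h : t ≤ t') :
    max (v - t) 0 ≤ max (v - t') 0 + (t' - t) * (if t < v then (1:ℝ) else 0) := by
  rcases le_or_gt v t with hv | hv
  · rw [if_neg (not_lt.mpr hv), max_eq_right (by linarith)]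
    have := le_max_right (v - t') (0:ℝ)
    linarith
  · rw [if_pos hv, max_eq_left (by linarith)]
    rcases le_or_gt v t' with hv' | hv'
    · rw [max_eq_right (by linarith)]; linarith
    · rw [max_eq_left (by linarith)]; linarith

lemma pt_lower {v t t' : ℝ} (h : t ≤ t') :
    max (v - t') 0 + (t' - t) * (if t' < v then (1:ℝ) else 0) ≤ max (v - t) 0 := by
  rcases le_or_gt v t' with hv | hv
  · rw [if_neg (not_lt.mpr hv), max_eq_right (by linarith)]
    have := le_max_right (v - t) (0:ℝ)
    have := le_max_left (v - t) (0:ℝ)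
    rcases le_or_gt v t with h2 | h2
    · rw [max_eq_right (by linarith)]; linarith
    · rw [max_eq_left (by linarith)]; linarith
  · rw [if_pos hv, max_eq_left (by linarith), max_eq_left (by linarith)]
    linarith

lemma intBound (μ : Measure (𝒳 × 𝒮 × Fin K)) [IsProbabilityMeasure μ]
    {p : Fin K → 𝒳 → 𝒮 → ℝ} (hpmeas : ∀ k, Measurable fun q : 𝒳 × 𝒮 => p k q.1 q.2)
    (hp01 : ∀ k x s, p k x s ∈ Icc (0:ℝ) 1)
    (k : Fin K) (s : 𝒮) (π lam : ℝ) {t t' : ℝ} (h : t ≤ t') :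
    ((∫ ω in {ω : 𝒳 × 𝒮 × Fin K | ω.2.1 = s}, max (π * (p k ω.1 ω.2.1 - lam) - t') 0 ∂μ)
        + (t' - t) * ((μ.restrict {ω : 𝒳 × 𝒮 × Fin K | ω.2.1 = s})
              {ω | t' < π * (p k ω.1 ω.2.1 - lam)}).toReal
      ≤ ∫ ω in {ω : 𝒳 × 𝒮 × Fin K | ω.2.1 = s}, max (π * (p k ω.1 ω.2.1 - lam) - t) 0 ∂μ)
    ∧ ((∫ ω in {ω : 𝒳 × 𝒮 × Fin K | ω.2.1 = s}, max (π * (p k ω.1 ω.2.1 - lam) - t) 0 ∂μ)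
      ≤ (∫ ω in {ω : 𝒳 × 𝒮 × Fin K | ω.2.1 = s}, max (π * (p k ω.1 ω.2.1 - lam) - t') 0 ∂μ)
        + (t' - t) * ((μ.restrict {ω : 𝒳 × 𝒮 × Fin K | ω.2.1 = s})
              {ω | t < π * (p k ω.1 ω.2.1 - lam)}).toReal) := by
  set v : 𝒳 × 𝒮 × Fin K → ℝ := fun ω => π * (p k ω.1 ω.2.1 - lam) with hv
  have hvmeas : Measurable v := ((measP hpmeas k).sub measurable_const).const_mul π
  set ν := μ.restrict {ω : 𝒳 × 𝒮 × Fin K | ω.2.1 = s} with hν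
  have hint : ∀ c : ℝ, Integrable (fun ω => max (v ω - c) 0) ν := by
    intro c
    refine (integrable_const (|π| * (1 + |lam|) + |c|)).mono'
      ((hvmeas.sub measurable_const).max measurable_const).aestronglyMeasurable
      (ae_of_all _ fun ω => ?_)
    have hp := hp01 k ω.1 ω.2.1
    simp only [mem_Icc] at hp
    have h1 : |p k ω.1 ω.2.1 - lam| ≤ 1 + |lam| := by
      rw [abs_le]
      constructor
      · have := le_abs_self lam; linarith
      · have := neg_abs_le lam; linarith
    have h2 : |v ω| ≤ |π| * (1 + |lam|) := by
      rw [hv]; rw [abs_mul]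
      exact mul_le_mul_of_nonneg_left h1 (abs_nonneg π)
    have h3 : |v ω - c| ≤ |π| * (1 + |lam|) + |c| := by
      calc |v ω - c| ≤ |v ω| + |c| := abs_sub _ _
        _ ≤ _ := by linarith
    rw [Real.norm_eq_abs, abs_of_nonneg (le_max_right _ _)]
    calc max (v ω - c) 0 ≤ |v ω - c| := max_le (le_abs_self _) (abs_nonneg _)
      _ ≤ _ := h3
  have hindint : ∀ (A : Set (𝒳 × 𝒮 × Fin K)), MeasurableSet A →
      Integrable (fun ω => A.indicator (fun _ => (1:ℝ)) ω) ν :=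
    fun A hA => (integrable_const (1:ℝ)).indicator hA
  have hindval : ∀ (A : Set (𝒳 × 𝒮 × Fin K)), MeasurableSet A →
      (∫ ω, A.indicator (fun _ => (1:ℝ)) ω ∂ν) = (ν A).toReal := by
    intro A hA
    rw [integral_indicator_const (1:ℝ) hA]; simp; rfl
  constructor
  · have hA : MeasurableSet {ω : 𝒳 × 𝒮 × Fin K | t' < v ω} :=
      measurableSet_lt measurable_const hvmeas
    have key : ∀ ω, max (v ω - t') 0 + (t' - t) * ({ω | t' < v ω}.indicator (fun _ => (1:ℝ)) ω)
        ≤ max (v ω - t) 0 := by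
      intro ω
      by_cases hω : ω ∈ {ω | t' < v ω}
      · rw [Set.indicator_of_mem hω]
        have := pt_lower (v := v ω) h
        rw [if_pos (show t' < v ω from hω)] at this; exact this
      · rw [Set.indicator_of_notMem hω]
        have := pt_lower (v := v ω) h
        rw [if_neg (show ¬ t' < v ω from hω)] at this; exact this
    have := integral_mono ((hint t').add ((hindint _ hA).const_mul (t' - t))) (hint t) key
    simp only [Pi.add_apply] at this
    rw [integral_add (hint t') ((hindint _ hA).const_mul (t' - t)),
        integral_const_mul _ _, hindval _ hA] at this
    exact this
  · have hA : MeasurableSet {ω : 𝒳 × 𝒮 × Fin K | t < v ω} :=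
      measurableSet_lt measurable_const hvmeas
    have key : ∀ ω, max (v ω - t) 0
        ≤ max (v ω - t') 0 + (t' - t) * ({ω | t < v ω}.indicator (fun _ => (1:ℝ)) ω) := by
      intro ω
      by_cases hω : ω ∈ {ω | t < v ω}
      · rw [Set.indicator_of_mem hω]
        have := pt_upper (v := v ω) h
        rw [if_pos (show t < v ω from hω)] at this; exact this
      · rw [Set.indicator_of_notMem hω]
        have := pt_upper (v := v ω) h
        rw [if_neg (show ¬ t < v ω from hω)] at this; exact this
    have := integral_mono (hint t) ((hint t').add ((hindint _ hA).const_mul (t' - t))) key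
    simp only [Pi.add_apply] at this
    rw [integral_add (hint t') ((hindint _ hA).const_mul (t' - t)),
        integral_const_mul _ _, hindval _ hA] at this
    exact this

lemma condProb_gt [MeasurableSingletonClass 𝒮] (μ : Measure (𝒳 × 𝒮 × Fin K))
    [IsProbabilityMeasure μ]
    {p : Fin K → 𝒳 → 𝒮 → ℝ} (hpmeas : ∀ k, Measurable fun q : 𝒳 × 𝒮 => p k q.1 q.2)
    {s : 𝒮} (hπ : 0 < probS μ s) (k : Fin K) (c : ℝ) :
    condProb μ {ω | c < p k ω.1 ω.2.1} s = 1 - Fks μ p k s c := by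
  set Es := {ω : 𝒳 × 𝒮 × Fin K | ω.2.1 = s} with hEs
  have hsum : μ ({ω | c < p k ω.1 ω.2.1} ∩ Es) + μ ({ω | p k ω.1 ω.2.1 ≤ c} ∩ Es) = μ Es := by
    rw [← measure_union]
    · congr 1
      ext ω
      simp only [mem_union, mem_inter_iff, mem_setOf_eq]
      constructor
      · rintro (⟨_, h⟩ | ⟨_, h⟩) <;> exact h
      · intro h
        rcases lt_or_ge c (p k ω.1 ω.2.1) with h1 | h1
        · exact Or.inl ⟨h1, h⟩
        · exact Or.inr ⟨h1, h⟩
    · rw [Set.disjoint_left]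
      rintro ω ⟨h1, _⟩ ⟨h2, _⟩
      simp only [mem_setOf_eq] at h1 h2
      exact absurd h2 (not_le.mpr h1)
    · exact (((measP hpmeas k) measurableSet_Iic).inter (measSlice s))
  have htr : (μ ({ω | c < p k ω.1 ω.2.1} ∩ Es)).toReal
      + (μ ({ω | p k ω.1 ω.2.1 ≤ c} ∩ Es)).toReal = probS μ s := by
    rw [← ENNReal.toReal_add (measure_ne_top μ _) (measure_ne_top μ _), hsum]
    rfl
  simp only [condProb, Fks, probS] at *
  field_simp
  linarith

lemma condProb_ge [MeasurableSingletonClass 𝒮] (μ : Measure (𝒳 × 𝒮 × Fin K))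
    [IsProbabilityMeasure μ]
    {p : Fin K → 𝒳 → 𝒮 → ℝ} (hpmeas : ∀ k, Measurable fun q : 𝒳 × 𝒮 => p k q.1 q.2)
    {s : 𝒮} (hπ : 0 < probS μ s) (k : Fin K)
    (hc : Continuous (fun t => Fks μ p k s t)) (c : ℝ) :
    condProb μ {ω | c ≤ p k ω.1 ω.2.1} s = 1 - Fks μ p k s c := by
  set Es := {ω : 𝒳 × 𝒮 × Fin K | ω.2.1 = s} with hEs
  have hsplit : μ ({ω | c ≤ p k ω.1 ω.2.1} ∩ Es) = μ ({ω | c < p k ω.1 ω.2.1} ∩ Es) := by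
    have hset : {ω : 𝒳 × 𝒮 × Fin K | c ≤ p k ω.1 ω.2.1} ∩ Es
        = ({ω | c < p k ω.1 ω.2.1} ∩ Es) ∪ ({ω | p k ω.1 ω.2.1 = c} ∩ Es) := by
      ext ω
      simp only [mem_inter_iff, mem_setOf_eq, mem_union]
      constructor
      · rintro ⟨h1, h2⟩
        rcases lt_or_eq_of_le h1 with h | h
        · exact Or.inl ⟨h, h2⟩
        · exact Or.inr ⟨h.symm, h2⟩
      · rintro (⟨h1, h2⟩ | ⟨h1, h2⟩)
        exacts [⟨le_of_lt h1, h2⟩, ⟨le_of_eq h1.symm, h2⟩]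
    rw [hset, measure_union, noatom μ hpmeas hπ k hc c, add_zero]
    · rw [Set.disjoint_left]
      rintro ω ⟨h1, _⟩ ⟨h2, _⟩
      simp only [mem_setOf_eq] at h1 h2
      exact absurd h2 (ne_of_gt h1)
    · exact (((measP hpmeas k) (measurableSet_singleton c)).inter (measSlice s))
  rw [← condProb_gt μ hpmeas hπ k c]
  simp only [condProb]
  rw [hsplit]

lemma sliceSum [MeasurableSingletonClass 𝒮] [Fintype 𝒮] (μ : Measure (𝒳 × 𝒮 × Fin K))
    (C : 𝒮 → Set (𝒳 × 𝒮 × Fin K)) (hmeas : ∀ s, MeasurableSet (C s))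
    (hsub : ∀ s, C s ⊆ {ω | ω.2.1 = s}) :
    μ (⋃ s ∈ Finset.univ, C s) = ∑ s : 𝒮, μ (C s) := by
  rw [measure_biUnion_finset]
  · intro s _ s' _ hss'
    refine Set.disjoint_left.mpr fun ω h1 h2 => ?_
    have e1 := hsub s h1
    have e2 := hsub s' h2
    simp only [mem_setOf_eq] at e1 e2
    exact hss' (e1 ▸ e2 ▸ rfl)
  · exact fun s _ => hmeas s

end Aux

theorem statement3
    {𝒳 𝒮 : Type*} [MeasurableSpace 𝒳] [MeasurableSpace 𝒮] [MeasurableSingletonClass 𝒮]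
    [Fintype 𝒮] [Nonempty 𝒮] {K : ℕ} (hK : 2 ≤ K)
    (μ : Measure (𝒳 × 𝒮 × Fin K)) (hμ : IsProbabilityMeasure μ)
    (hπ : ∀ s : 𝒮, 0 < probS μ s)
    (p : Fin K → 𝒳 → 𝒮 → ℝ)
    (hpmeas : ∀ k, Measurable fun q : 𝒳 × 𝒮 => p k q.1 q.2)
    (hp01 : ∀ k x s, p k x s ∈ Icc (0:ℝ) 1)
    (hpsum : ∀ x s, ∑ k : Fin K, p k x s = 1)
    (hlink : ∀ (k : Fin K) (A : Set (𝒳 × 𝒮)), MeasurableSet A →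
      (μ {ω | ω.2.2 = k ∧ (ω.1, ω.2.1) ∈ A}).toReal
        = ∫ ω in {ω : 𝒳 × 𝒮 × Fin K | (ω.1, ω.2.1) ∈ A}, p k ω.1 ω.2.1 ∂μ)
    (β : ℝ) (hβ0 : 0 < β) (hβK : β < (K : ℝ))
    (hA1 : Assumption1 μ p)
    (lam : ℝ) (γ : Fin K → 𝒮 → ℝ) (hmem : (lam, γ) ∈ Δset K 𝒮)
    (hmin : ∀ r ∈ Δset K 𝒮, Hfun μ p β lam γ ≤ Hfun μ p β r.1 r.2)
 :
    DPfair μ (oracle μ p lam γ) := by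
  classical
  haveI := hμ
  intro k s₀
  set Γ := oracle μ p lam γ with hΓ
  set c : 𝒮 → ℝ := fun s => lam + γ k s / probS μ s with hc
  set T : ℝ → Fin K → 𝒮 → ℝ := fun t k0 s0 =>
    condMean μ (fun ω => max (probS μ s0 * (p k0 ω.1 ω.2.1 - lam) - t) 0) s0 with hT
  have hHrepr : ∀ g : Fin K → 𝒮 → ℝ, Hfun μ p β lam g
      = (∑ k0 : Fin K, ∑ s0 : 𝒮, T (g k0 s0) k0 s0) + lam * β := fun g => rfl
  -- Step 1: pairwise comparison of cdfs at the thresholds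
  have key : ∀ s s' : 𝒮, s ≠ s' → Fks μ p k s (c s) ≤ Fks μ p k s' (c s') := by
    intro s s' hss'
    have hineq : ∀ ε : ℝ, 0 < ε →
        Fks μ p k s (lam + (γ k s - ε) / probS μ s)
          ≤ Fks μ p k s' (lam + (γ k s' + ε) / probS μ s') := by
      intro ε hε
      set γ' : Fin K → 𝒮 → ℝ := fun k0 s0 =>
        γ k0 s0 + (if k0 = k ∧ s0 = s' then ε else 0)
          - (if k0 = k ∧ s0 = s then ε else 0) with hγ'
      have hγ'ks : γ' k s = γ k s - ε := by
        simp [hγ', hss']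
      have hγ'ks' : γ' k s' = γ k s' + ε := by
        simp [hγ', Ne.symm hss']
      have hγ'other : ∀ k0 s0, ¬(k0 = k ∧ s0 = s) → ¬(k0 = k ∧ s0 = s') →
          γ' k0 s0 = γ k0 s0 := by
        intro k0 s0 h1 h2
        simp [hγ', if_neg h1, if_neg h2]
      have hmem' : ((lam, γ') : ℝ × (Fin K → 𝒮 → ℝ)) ∈ Δset K 𝒮 := by
        refine ⟨hmem.1, fun k0 => ?_⟩
        have h0 := hmem.2 k0
        have hsa : ∀ sa : 𝒮, (∑ s0 : 𝒮, if k0 = k ∧ s0 = sa then ε else 0)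
            = if k0 = k then ε else 0 := by
          intro sa
          by_cases hk0 : k0 = k
          · subst hk0; simp
          · simp [hk0]
        simp only [hγ']
        rw [Finset.sum_sub_distrib, Finset.sum_add_distrib, hsa s', hsa s, h0]
        ring
      have hH := hmin (lam, γ') hmem'
      rw [hHrepr γ, hHrepr γ'] at hH
      have hH2 : (∑ k0 : Fin K, ∑ s0 : 𝒮, T (γ k0 s0) k0 s0)
          ≤ ∑ k0 : Fin K, ∑ s0 : 𝒮, T (γ' k0 s0) k0 s0 := by linarith
      have hdiff : (∑ k0 : Fin K, ∑ s0 : 𝒮, T (γ' k0 s0) k0 s0)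
            - (∑ k0 : Fin K, ∑ s0 : 𝒮, T (γ k0 s0) k0 s0)
          = (T (γ' k s) k s - T (γ k s) k s) + (T (γ' k s') k s' - T (γ k s') k s') := by
        rw [← Finset.sum_sub_distrib]
        simp_rw [← Finset.sum_sub_distrib]
        rw [Finset.sum_eq_single k]
        · rw [← Finset.sum_subset (Finset.subset_univ ({s, s'} : Finset 𝒮))]
          · rw [Finset.sum_pair hss']
          · intro x _ hx
            simp only [Finset.mem_insert, Finset.mem_singleton, not_or] at hx
            rw [hγ'other k x (fun h => hx.1 h.2) (fun h => hx.2 h.2)]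
            ring
        · intro b _ hb
          apply Finset.sum_eq_zero
          intro s0 _
          rw [hγ'other b s0 (fun h => hb h.1) (fun h => hb h.1)]
          ring
        · intro h; exact absurd (Finset.mem_univ k) h
      -- bound the two difference terms
      have hAmeas : MeasurableSet {ω : 𝒳 × 𝒮 × Fin K |
          γ k s - ε < probS μ s * (p k ω.1 ω.2.1 - lam)} :=
        measurableSet_lt measurable_const
          (((measP hpmeas k).sub measurable_const).const_mul _)
      have hBmeas : MeasurableSet {ω : 𝒳 × 𝒮 × Fin K |
          γ k s' + ε < probS μ s' * (p k ω.1 ω.2.1 - lam)} :=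
        measurableSet_lt measurable_const
          (((measP hpmeas k).sub measurable_const).const_mul _)
      have hTs : T (γ k s - ε) k s ≤ T (γ k s) k s
          + ε * condProb μ {ω | γ k s - ε < probS μ s * (p k ω.1 ω.2.1 - lam)} s := by
        have hb1 := (intBound μ hpmeas hp01 k s (probS μ s) lam
          (show γ k s - ε ≤ γ k s by linarith)).2
        rw [Measure.restrict_apply hAmeas] at hb1
        have he : γ k s - (γ k s - ε) = ε := by ring
        rw [he] at hb1
        show (∫ ω in {ω : 𝒳 × 𝒮 × Fin K | ω.2.1 = s},
            max (probS μ s * (p k ω.1 ω.2.1 - lam) - (γ k s - ε)) 0 ∂μ) / probS μ s ≤ _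
        have h2 : (∫ ω in {ω : 𝒳 × 𝒮 × Fin K | ω.2.1 = s},
              max (probS μ s * (p k ω.1 ω.2.1 - lam) - (γ k s - ε)) 0 ∂μ) / probS μ s
            ≤ ((∫ ω in {ω : 𝒳 × 𝒮 × Fin K | ω.2.1 = s},
              max (probS μ s * (p k ω.1 ω.2.1 - lam) - γ k s) 0 ∂μ)
              + ε * (μ ({ω | γ k s - ε < probS μ s * (p k ω.1 ω.2.1 - lam)}
                  ∩ {ω | ω.2.1 = s})).toReal) / probS μ s := by
          gcongr
          exact (hπ s).le
        rw [add_div, mul_div_assoc] at h2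
        have hTval : T (γ k s) k s = (∫ ω in {ω : 𝒳 × 𝒮 × Fin K | ω.2.1 = s},
            max (probS μ s * (p k ω.1 ω.2.1 - lam) - γ k s) 0 ∂μ) / probS μ s := rfl
        have hCval : condProb μ {ω | γ k s - ε < probS μ s * (p k ω.1 ω.2.1 - lam)} s
            = (μ ({ω | γ k s - ε < probS μ s * (p k ω.1 ω.2.1 - lam)}
                ∩ {ω | ω.2.1 = s})).toReal / probS μ s := rfl
        rw [hTval, hCval]
        linarith
      have hTs' : T (γ k s' + ε) k s' ≤ T (γ k s') k s'
          - ε * condProb μ {ω | γ k s' + ε < probS μ s' * (p k ω.1 ω.2.1 - lam)} s' := by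
        have hb1 := (intBound μ hpmeas hp01 k s' (probS μ s') lam
          (show γ k s' ≤ γ k s' + ε by linarith)).1
        rw [Measure.restrict_apply hBmeas] at hb1
        have he : γ k s' + ε - γ k s' = ε := by ring
        rw [he] at hb1
        show (∫ ω in {ω : 𝒳 × 𝒮 × Fin K | ω.2.1 = s'},
            max (probS μ s' * (p k ω.1 ω.2.1 - lam) - (γ k s' + ε)) 0 ∂μ) / probS μ s' ≤ _
        have h2 : ((∫ ω in {ω : 𝒳 × 𝒮 × Fin K | ω.2.1 = s'},
              max (probS μ s' * (p k ω.1 ω.2.1 - lam) - (γ k s' + ε)) 0 ∂μ)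
              + ε * (μ ({ω | γ k s' + ε < probS μ s' * (p k ω.1 ω.2.1 - lam)}
                  ∩ {ω | ω.2.1 = s'})).toReal) / probS μ s'
            ≤ (∫ ω in {ω : 𝒳 × 𝒮 × Fin K | ω.2.1 = s'},
              max (probS μ s' * (p k ω.1 ω.2.1 - lam) - γ k s') 0 ∂μ) / probS μ s' := by
          gcongr
          exact (hπ s').le
        rw [add_div, mul_div_assoc] at h2
        have hTval : T (γ k s') k s' = (∫ ω in {ω : 𝒳 × 𝒮 × Fin K | ω.2.1 = s'},
            max (probS μ s' * (p k ω.1 ω.2.1 - lam) - γ k s') 0 ∂μ) / probS μ s' := rfl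
        have hCval : condProb μ {ω | γ k s' + ε < probS μ s' * (p k ω.1 ω.2.1 - lam)} s'
            = (μ ({ω | γ k s' + ε < probS μ s' * (p k ω.1 ω.2.1 - lam)}
                ∩ {ω | ω.2.1 = s'})).toReal / probS μ s' := rfl
        rw [hTval, hCval]
        linarith
      -- combine
      have hcomb : condProb μ {ω | γ k s' + ε < probS μ s' * (p k ω.1 ω.2.1 - lam)} s'
          ≤ condProb μ {ω | γ k s - ε < probS μ s * (p k ω.1 ω.2.1 - lam)} s := by
        rw [hγ'ks, hγ'ks'] at hdiff
        have h0 : (0:ℝ) ≤ (T (γ k s - ε) k s - T (γ k s) k s)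
            + (T (γ k s' + ε) k s' - T (γ k s') k s') := by
          rw [← hdiff]; linarith
        have := hTs
        have := hTs'
        have hεpos := hε
        nlinarith
      -- rewrite sets as thresholds
      have hset1 : {ω : 𝒳 × 𝒮 × Fin K | γ k s - ε < probS μ s * (p k ω.1 ω.2.1 - lam)}
          = {ω | lam + (γ k s - ε) / probS μ s < p k ω.1 ω.2.1} := by
        ext ω
        simp only [mem_setOf_eq]
        constructor
        · intro h
          have h2 : (γ k s - ε) / probS μ s < p k ω.1 ω.2.1 - lam :=
            (div_lt_iff₀ (hπ s)).mpr (by nlinarith)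
          linarith
        · intro h
          have h2 : (γ k s - ε) / probS μ s < p k ω.1 ω.2.1 - lam := by linarith
          have := (div_lt_iff₀ (hπ s)).mp h2
          nlinarith
      have hset2 : {ω : 𝒳 × 𝒮 × Fin K | γ k s' + ε < probS μ s' * (p k ω.1 ω.2.1 - lam)}
          = {ω | lam + (γ k s' + ε) / probS μ s' < p k ω.1 ω.2.1} := by
        ext ω
        simp only [mem_setOf_eq]
        constructor
        · intro h
          have h2 : (γ k s' + ε) / probS μ s' < p k ω.1 ω.2.1 - lam :=
            (div_lt_iff₀ (hπ s')).mpr (by nlinarith)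
          linarith
        · intro h
          have h2 : (γ k s' + ε) / probS μ s' < p k ω.1 ω.2.1 - lam := by linarith
          have := (div_lt_iff₀ (hπ s')).mp h2
          nlinarith
      rw [hset1, hset2, condProb_gt μ hpmeas (hπ s) k _,
        condProb_gt μ hpmeas (hπ s') k _] at hcomb
      linarith
    -- pass to the limit ε → 0⁺
    have h1 : Tendsto (fun ε : ℝ => Fks μ p k s (lam + (γ k s - ε) / probS μ s))
        (𝓝[>] 0) (𝓝 (Fks μ p k s (c s))) := by
      have hcε : Continuous fun ε : ℝ => lam + (γ k s - ε) / probS μ s :=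
        continuous_const.add ((continuous_const.sub continuous_id).div_const _)
      have h' : Tendsto (fun ε : ℝ => lam + (γ k s - ε) / probS μ s) (𝓝[>] 0)
          (𝓝 (lam + (γ k s - 0) / probS μ s)) :=
        (hcε.tendsto 0).mono_left nhdsWithin_le_nhds
      have h'' := ((hA1 k s).tendsto _).comp h'
      have hval : lam + (γ k s - 0) / probS μ s = c s := by rw [hc]; simp
      rw [hval] at h''
      exact h''
    have h2 : Tendsto (fun ε : ℝ => Fks μ p k s' (lam + (γ k s' + ε) / probS μ s'))
        (𝓝[>] 0) (𝓝 (Fks μ p k s' (c s'))) := by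
      have hcε : Continuous fun ε : ℝ => lam + (γ k s' + ε) / probS μ s' :=
        continuous_const.add ((continuous_const.add continuous_id).div_const _)
      have h' : Tendsto (fun ε : ℝ => lam + (γ k s' + ε) / probS μ s') (𝓝[>] 0)
          (𝓝 (lam + (γ k s' + 0) / probS μ s')) :=
        (hcε.tendsto 0).mono_left nhdsWithin_le_nhds
      have h'' := ((hA1 k s').tendsto _).comp h'
      have hval : lam + (γ k s' + 0) / probS μ s' = c s' := by rw [hc]; simp
      rw [hval] at h''
      exact h''
    refine le_of_tendsto_of_tendsto h1 h2 ?_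
    filter_upwards [self_mem_nhdsWithin] with ε hε
    exact hineq ε hε
  have hFeq : ∀ s s' : 𝒮, Fks μ p k s (c s) = Fks μ p k s' (c s') := by
    intro s s'
    rcases eq_or_ne s s' with rfl | h
    · rfl
    · exact le_antisymm (key s s' h) (key s' s h.symm)
  -- Step 2: conditional probabilities of the membership event
  have hmemEs : ∀ s : 𝒮, memEvent Γ k ∩ {ω | ω.2.1 = s}
      = {ω | c s ≤ p k ω.1 ω.2.1} ∩ {ω | ω.2.1 = s} := by
    intro s
    ext ω
    simp only [memEvent, hΓ, oracle, mem_inter_iff, mem_setOf_eq]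
    constructor
    · rintro ⟨h1, h2⟩
      rw [h2] at h1
      refine ⟨?_, h2⟩
      show lam + γ k s / probS μ s ≤ p k ω.1 ω.2.1
      rw [h2]
      exact h1
    · rintro ⟨h1, h2⟩
      have h1' : lam + γ k s / probS μ s ≤ p k ω.1 ω.2.1 := h1
      refine ⟨?_, h2⟩
      show lam + γ k ω.2.1 / probS μ ω.2.1 ≤ p k ω.1 ω.2.1
      rw [h2]
      rw [h2] at h1'
      exact h1'
  have hq : ∀ s : 𝒮, condProb μ (memEvent Γ k) s = 1 - Fks μ p k s (c s) := by
    intro s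
    have heq2 : condProb μ (memEvent Γ k) s = condProb μ {ω | c s ≤ p k ω.1 ω.2.1} s := by
      simp only [condProb]
      rw [hmemEs s]
    rw [heq2, condProb_ge μ hpmeas (hπ s) k (hA1 k s) (c s)]
  set q : ℝ := 1 - Fks μ p k s₀ (c s₀) with hqdef
  have hqall : ∀ s : 𝒮, condProb μ (memEvent Γ k) s = q := by
    intro s
    rw [hq s, hqdef, hFeq s s₀]
  -- Step 3: total probability
  have hmeasC : ∀ s : 𝒮, MeasurableSet (memEvent Γ k ∩ {ω : 𝒳 × 𝒮 × Fin K | ω.2.1 = s}) := by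
    intro s
    rw [hmemEs s]
    exact ((measP hpmeas k) measurableSet_Ici).inter (measSlice s)
  have hU : memEvent Γ k = ⋃ s ∈ Finset.univ, (memEvent Γ k ∩ {ω | ω.2.1 = s}) := by
    ext ω
    simp only [Finset.mem_univ, iUnion_true, mem_iUnion, mem_inter_iff, mem_setOf_eq]
    constructor
    · intro h
      exact ⟨ω.2.1, h, rfl⟩
    · rintro ⟨s, h, _⟩
      exact h
  have htot : (μ (memEvent Γ k)).toReal
      = ∑ s : 𝒮, (μ (memEvent Γ k ∩ {ω | ω.2.1 = s})).toReal := by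
    have h1 : μ (memEvent Γ k) = ∑ s : 𝒮, μ (memEvent Γ k ∩ {ω | ω.2.1 = s}) := by
      conv_lhs => rw [hU]
      exact sliceSum μ _ hmeasC (fun s => inter_subset_right)
    rw [h1]
    exact ENNReal.toReal_sum (fun s _ => measure_ne_top μ _)
  have hterm : ∀ s : 𝒮, (μ (memEvent Γ k ∩ {ω | ω.2.1 = s})).toReal = q * probS μ s := by
    intro s
    have h := hqall s
    simp only [condProb] at h
    have hπs := hπ s
    field_simp at h
    linarith [h]
  have hpis : ∑ s : 𝒮, probS μ s = 1 := by
    have hU2 : (univ : Set (𝒳 × 𝒮 × Fin K))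
        = ⋃ s ∈ Finset.univ, {ω : 𝒳 × 𝒮 × Fin K | ω.2.1 = s} := by
      ext ω
      simp
    have h2 := sliceSum μ (fun s => {ω : 𝒳 × 𝒮 × Fin K | ω.2.1 = s})
      (fun s => measSlice s) (fun s => subset_rfl)
    rw [← hU2] at h2
    have h3 : (μ (univ : Set (𝒳 × 𝒮 × Fin K))).toReal = 1 := by
      simp
    rw [h2] at h3
    rw [ENNReal.toReal_sum (fun s _ => measure_ne_top μ _)] at h3
    exact h3
  have hfinal : (μ (memEvent Γ k)).toReal = q := by
    rw [htot]
    have : ∀ s : 𝒮, (μ (memEvent Γ k ∩ {ω | ω.2.1 = s})).toReal = q * probS μ s := hterm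
    rw [Finset.sum_congr rfl (fun s _ => this s), ← Finset.mul_sum, hpis, mul_one]
  rw [hqall s₀, hfinal]

end
end

section
/- Assume Assumption 1 (continuity) and fix β ∈ (0,K). For any minimizer (λ*,γ*) of H over Δ, the β-specific oracle Γ*_β(x,s) := {k ∈ [K] : p_k(x,s) ≥ λ* + γ*_{k,s}/π_s} minimizes the Lagrangian risk over all set-valued classifiers: R_{λ*,γ*}(Γ*_β) ≤ R_{λ*,γ*}(Γ) for every Γ ∈ 𝚪. -/
open MeasureTheory Set Filter

noncomputable section

lemma aux_integral_nonpos_le {α : Type*} [MeasurableSpace α] (ν : Measure α)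
    (f : α → ℝ) (hm : Measurable f) (hf : MeasureTheory.Integrable f ν)
    (B : Set α) (hB : MeasurableSet B) :
    ∫ x in {x | f x ≤ 0}, f x ∂ν ≤ ∫ x in B, f x ∂ν := by
  have hN : MeasurableSet {x | f x ≤ 0} := measurableSet_le hm measurable_const
  have h1 : ∫ x in {x | f x ≤ 0} ∩ B, f x ∂ν + ∫ x in {x | f x ≤ 0} \ B, f x ∂ν
      = ∫ x in {x | f x ≤ 0}, f x ∂ν :=
    MeasureTheory.integral_inter_add_diff hB hf.integrableOn
  have h2 : ∫ x in B ∩ {x | f x ≤ 0}, f x ∂ν + ∫ x in B \ {x | f x ≤ 0}, f x ∂ν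
      = ∫ x in B, f x ∂ν :=
    MeasureTheory.integral_inter_add_diff hN hf.integrableOn
  have h3 : ∫ x in {x | f x ≤ 0} \ B, f x ∂ν ≤ 0 :=
    MeasureTheory.setIntegral_nonpos (hN.diff hB) (fun x hx => hx.1)
  have h4 : (0:ℝ) ≤ ∫ x in B \ {x | f x ≤ 0}, f x ∂ν :=
    MeasureTheory.setIntegral_nonneg (hB.diff hN) (fun x hx => (lt_of_not_ge hx.2).le)
  have h5 : ∫ x in {x | f x ≤ 0} ∩ B, f x ∂ν = ∫ x in B ∩ {x | f x ≤ 0}, f x ∂ν := by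
    rw [Set.inter_comm]
  linarith

lemma aux_ncard_sum {K : ℕ} (S : Set (Fin K)) :
    (S.ncard : ℝ) = ∑ k : Fin K, S.indicator (fun _ => (1:ℝ)) k := by
  classical
  have h : S = ↑(Finset.univ.filter (· ∈ S)) := by ext k; simp
  rw [h, Set.ncard_coe_finset, Finset.card_filter]
  push_cast
  refine Finset.sum_congr rfl fun k _ => ?_
  simp [Set.indicator_apply]

theorem statement4
    {𝒳 𝒮 : Type*} [MeasurableSpace 𝒳] [MeasurableSpace 𝒮] [MeasurableSingletonClass 𝒮]
    [Fintype 𝒮] [Nonempty 𝒮] {K : ℕ} (hK : 2 ≤ K)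
    (μ : Measure (𝒳 × 𝒮 × Fin K)) (hμ : IsProbabilityMeasure μ)
    (hπ : ∀ s : 𝒮, 0 < probS μ s)
    (p : Fin K → 𝒳 → 𝒮 → ℝ)
    (hpmeas : ∀ k, Measurable fun q : 𝒳 × 𝒮 => p k q.1 q.2)
    (hp01 : ∀ k x s, p k x s ∈ Icc (0:ℝ) 1)
    (hpsum : ∀ x s, ∑ k : Fin K, p k x s = 1)
    (hlink : ∀ (k : Fin K) (A : Set (𝒳 × 𝒮)), MeasurableSet A →
      (μ {ω | ω.2.2 = k ∧ (ω.1, ω.2.1) ∈ A}).toReal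
        = ∫ ω in {ω : 𝒳 × 𝒮 × Fin K | (ω.1, ω.2.1) ∈ A}, p k ω.1 ω.2.1 ∂μ)
    (β : ℝ) (hβ0 : 0 < β) (hβK : β < (K : ℝ))
    (hA1 : Assumption1 μ p)
    (lam : ℝ) (γ : Fin K → 𝒮 → ℝ) (hmem : (lam, γ) ∈ Δset K 𝒮)
    (hmin : ∀ r ∈ Δset K 𝒮, Hfun μ p β lam γ ≤ Hfun μ p β r.1 r.2)
 :
    ∀ Γ : 𝒳 → 𝒮 → Set (Fin K), IsClassifier Γ →
      lagRisk μ β lam γ (oracle μ p lam γ) ≤ lagRisk μ β lam γ Γ := by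
  classical
  intro Γ hΓ
  have hproj : Measurable (fun ω : 𝒳 × 𝒮 × Fin K => (ω.1, ω.2.1)) :=
    measurable_fst.prodMk (measurable_fst.comp measurable_snd)
  have hSmeas : ∀ s : 𝒮, MeasurableSet {ω : 𝒳 × 𝒮 × Fin K | ω.2.1 = s} := fun s =>
    (measurable_fst.comp measurable_snd) (measurableSet_singleton s)
  have hpm : ∀ k, Measurable (fun ω : 𝒳 × 𝒮 × Fin K => p k ω.1 ω.2.1) := fun k =>
    (hpmeas k).comp hproj
  have hpint : ∀ k, Integrable (fun ω : 𝒳 × 𝒮 × Fin K => p k ω.1 ω.2.1) μ := by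
    intro k
    refine ⟨(hpm k).aestronglyMeasurable, ?_⟩
    apply MeasureTheory.HasFiniteIntegral.of_bounded (C := 1)
    filter_upwards with ω
    rw [Real.norm_eq_abs, abs_le]
    exact ⟨by linarith [(hp01 k ω.1 ω.2.1).1], (hp01 k ω.1 ω.2.1).2⟩
  set f : Fin K → 𝒮 → (𝒳 × 𝒮 × Fin K) → ℝ :=
    fun k s ω => lam + γ k s / probS μ s - p k ω.1 ω.2.1 with hfdef
  have hfm : ∀ k s, Measurable (f k s) := fun k s => measurable_const.sub (hpm k)
  have hfint : ∀ k s, Integrable (f k s) μ := fun k s => (integrable_const _).sub (hpint k)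
  have hO : IsClassifier (oracle μ p lam γ) := by
    intro k
    have hg : Measurable (fun q : 𝒳 × 𝒮 => lam + γ k q.2 / probS μ q.2) :=
      measurable_const.add
        ((measurable_of_countable (fun s : 𝒮 => γ k s / probS μ s)).comp measurable_snd)
    show MeasurableSet {q : 𝒳 × 𝒮 | lam + γ k q.2 / probS μ q.2 ≤ p k q.1 q.2}
    exact measurableSet_le hg (hpmeas k)
  have decomp : ∀ Γ' : 𝒳 → 𝒮 → Set (Fin K), IsClassifier Γ' →
      lagRisk μ β lam γ Γ' = 1 - lam * β +
        ∑ k : Fin K, ∑ s : 𝒮, ∫ ω in memEvent Γ' k ∩ {ω | ω.2.1 = s}, f k s ω ∂μ := by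
    intro Γ' hΓ'
    have hE : ∀ k, MeasurableSet (memEvent Γ' k) := fun k => hproj (hΓ' k)
    have hsplit : ∀ (E : Set (𝒳 × 𝒮 × Fin K)), MeasurableSet E →
        ∀ (g : (𝒳 × 𝒮 × Fin K) → ℝ), Integrable g μ →
        ∫ ω in E, g ω ∂μ = ∑ s : 𝒮, ∫ ω in E ∩ {ω | ω.2.1 = s}, g ω ∂μ := by
      intro E hEm g hg
      have hU : E = ⋃ s ∈ Finset.univ, E ∩ {ω : 𝒳 × 𝒮 × Fin K | ω.2.1 = s} := by
        ext ω; simp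
      conv_lhs => rw [hU]
      rw [MeasureTheory.integral_biUnion_finset Finset.univ
        (fun s _ => hEm.inter (hSmeas s)) ?_ (fun s _ => hg.integrableOn)]
      intro s _ s' _ hss
      simp only [Function.onFun]
      rw [Set.disjoint_left]
      rintro ω ⟨_, h1⟩ ⟨_, h2⟩
      exact hss (h1.symm.trans h2)
    have hrisk : risk μ Γ' = 1 - ∑ k : Fin K, ∫ ω in memEvent Γ' k, p k ω.1 ω.2.1 ∂μ := by
      have hYk : ∀ k : Fin K, MeasurableSet {ω : 𝒳 × 𝒮 × Fin K | ω.2.2 = k} := fun k =>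
        (measurable_snd.comp measurable_snd) (measurableSet_singleton k)
      have hUeq : {ω : 𝒳 × 𝒮 × Fin K | ω.2.2 ∈ Γ' ω.1 ω.2.1}
          = ⋃ k ∈ Finset.univ, ({ω : 𝒳 × 𝒮 × Fin K | ω.2.2 = k} ∩ memEvent Γ' k) := by
        ext ω
        simp only [Set.mem_setOf_eq, Set.mem_iUnion, Set.mem_inter_iff, Finset.mem_univ,
          exists_prop, true_and, memEvent]
        constructor
        · intro h; exact ⟨ω.2.2, rfl, h⟩
        · rintro ⟨k, hk, hmm⟩; exact hk ▸ hmm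
      have hmeasU : MeasurableSet {ω : 𝒳 × 𝒮 × Fin K | ω.2.2 ∈ Γ' ω.1 ω.2.1} := by
        rw [hUeq]
        exact Finset.measurableSet_biUnion _ (fun k _ => (hYk k).inter (hE k))
      have hsum : μ {ω : 𝒳 × 𝒮 × Fin K | ω.2.2 ∈ Γ' ω.1 ω.2.1}
          = ∑ k : Fin K, μ ({ω : 𝒳 × 𝒮 × Fin K | ω.2.2 = k} ∩ memEvent Γ' k) := by
        rw [hUeq]
        refine measure_biUnion_finset ?_ (fun k _ => (hYk k).inter (hE k))
        intro k _ k' _ hkk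
        simp only [Function.onFun]
        rw [Set.disjoint_left]
        rintro ω ⟨h1, _⟩ ⟨h2, _⟩
        exact hkk (h1.symm.trans h2)
      have hterm : ∀ k : Fin K, (μ ({ω : 𝒳 × 𝒮 × Fin K | ω.2.2 = k} ∩ memEvent Γ' k)).toReal
          = ∫ ω in memEvent Γ' k, p k ω.1 ω.2.1 ∂μ := by
        intro k
        exact hlink k {q : 𝒳 × 𝒮 | k ∈ Γ' q.1 q.2} (hΓ' k)
      have hcompl : {ω : 𝒳 × 𝒮 × Fin K | ω.2.2 ∉ Γ' ω.1 ω.2.1}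
          = {ω : 𝒳 × 𝒮 × Fin K | ω.2.2 ∈ Γ' ω.1 ω.2.1}ᶜ := rfl
      unfold risk
      rw [hcompl, measure_compl hmeasU (measure_ne_top μ _), measure_univ,
        ENNReal.toReal_sub_of_le prob_le_one ENNReal.one_ne_top, ENNReal.toReal_one, hsum,
        ENNReal.toReal_sum (fun k _ => measure_ne_top μ _)]
      exact congrArg (fun z => 1 - z) (Finset.sum_congr rfl fun k _ => hterm k)
    have hexp : expSize μ Γ' = ∑ k : Fin K, (μ (memEvent Γ' k)).toReal := by
      unfold expSize
      have h1 : ∀ ω : 𝒳 × 𝒮 × Fin K, ((Γ' ω.1 ω.2.1).ncard : ℝ)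
          = ∑ k : Fin K, Set.indicator (memEvent Γ' k) (fun _ => (1:ℝ)) ω := by
        intro ω
        rw [aux_ncard_sum]
        refine Finset.sum_congr rfl fun k _ => ?_
        simp [Set.indicator_apply, memEvent]
      simp_rw [h1]
      rw [integral_finset_sum _ (fun k _ => (integrable_const (1:ℝ)).indicator (hE k))]
      refine Finset.sum_congr rfl fun k _ => ?_
      rw [MeasureTheory.integral_indicator (hE k), MeasureTheory.setIntegral_const,
        smul_eq_mul, mul_one, measureReal_def]
    have hterm2 : ∀ (k : Fin K) (s : 𝒮),
        ∫ ω in memEvent Γ' k ∩ {ω | ω.2.1 = s}, f k s ω ∂μ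
        = (lam + γ k s / probS μ s) * (μ (memEvent Γ' k ∩ {ω | ω.2.1 = s})).toReal
          - ∫ ω in memEvent Γ' k ∩ {ω | ω.2.1 = s}, p k ω.1 ω.2.1 ∂μ := by
      intro k s
      have : ∫ ω in memEvent Γ' k ∩ {ω | ω.2.1 = s}, f k s ω ∂μ
          = ∫ ω in memEvent Γ' k ∩ {ω | ω.2.1 = s},
              ((lam + γ k s / probS μ s) - p k ω.1 ω.2.1) ∂μ := rfl
      rw [this, MeasureTheory.integral_sub
        (MeasureTheory.integrableOn_const (C := lam + γ k s / probS μ s) (measure_ne_top μ (memEvent Γ' k ∩ {ω | ω.2.1 = s})) enorm_ne_top)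
        ((hpint k).integrableOn), MeasureTheory.setIntegral_const, smul_eq_mul, measureReal_def]
      ring
    have hPs : ∀ k, ∫ ω in memEvent Γ' k, p k ω.1 ω.2.1 ∂μ
        = ∑ s : 𝒮, ∫ ω in memEvent Γ' k ∩ {ω | ω.2.1 = s}, p k ω.1 ω.2.1 ∂μ :=
      fun k => hsplit _ (hE k) _ (hpint k)
    have hms : ∀ k, (μ (memEvent Γ' k)).toReal
        = ∑ s : 𝒮, (μ (memEvent Γ' k ∩ {ω | ω.2.1 = s})).toReal := by
      intro k
      have h := hsplit (memEvent Γ' k) (hE k) (fun _ => (1:ℝ)) (integrable_const 1)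
      simpa [MeasureTheory.setIntegral_const, measureReal_def] using h
    unfold lagRisk
    rw [hrisk, hexp]
    simp only [condProb]
    simp_rw [hPs, hms, hterm2]
    have e1 : ∀ (k : Fin K) (s : 𝒮),
        (lam + γ k s / probS μ s) * (μ (memEvent Γ' k ∩ {ω | ω.2.1 = s})).toReal
          - ∫ ω in memEvent Γ' k ∩ {ω | ω.2.1 = s}, p k ω.1 ω.2.1 ∂μ
        = lam * (μ (memEvent Γ' k ∩ {ω | ω.2.1 = s})).toReal
          + γ k s * ((μ (memEvent Γ' k ∩ {ω | ω.2.1 = s})).toReal / probS μ s)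
          - ∫ ω in memEvent Γ' k ∩ {ω | ω.2.1 = s}, p k ω.1 ω.2.1 ∂μ := by
      intro k s; ring
    simp_rw [e1, Finset.sum_sub_distrib, Finset.sum_add_distrib, ← Finset.mul_sum]
    ring
  rw [decomp Γ hΓ, decomp (oracle μ p lam γ) hO]
  have key : ∀ (k : Fin K) (s : 𝒮),
      ∫ ω in memEvent (oracle μ p lam γ) k ∩ {ω | ω.2.1 = s}, f k s ω ∂μ
      ≤ ∫ ω in memEvent Γ k ∩ {ω | ω.2.1 = s}, f k s ω ∂μ := by
    intro k s
    have hNm : MeasurableSet {ω : 𝒳 × 𝒮 × Fin K | f k s ω ≤ 0} :=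
      measurableSet_le (hfm k s) measurable_const
    have horacle_eq : memEvent (oracle μ p lam γ) k ∩ {ω : 𝒳 × 𝒮 × Fin K | ω.2.1 = s}
        = {ω | f k s ω ≤ 0} ∩ {ω : 𝒳 × 𝒮 × Fin K | ω.2.1 = s} := by
      ext ⟨x, t, y⟩
      simp only [memEvent, oracle, Set.mem_inter_iff, Set.mem_setOf_eq, hfdef]
      constructor
      · rintro ⟨h1, rfl⟩
        exact ⟨sub_nonpos.mpr h1, rfl⟩
      · rintro ⟨h1, rfl⟩
        exact ⟨sub_nonpos.mp h1, rfl⟩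
    have hrr : ∀ (E : Set (𝒳 × 𝒮 × Fin K)), MeasurableSet E →
        ∫ ω in E ∩ {ω : 𝒳 × 𝒮 × Fin K | ω.2.1 = s}, f k s ω ∂μ
        = ∫ ω in E, f k s ω ∂(μ.restrict {ω : 𝒳 × 𝒮 × Fin K | ω.2.1 = s}) := by
      intro E hEm
      rw [MeasureTheory.Measure.restrict_restrict hEm]
    rw [horacle_eq, hrr _ hNm, hrr _ (show MeasurableSet (memEvent Γ k) from hproj (hΓ k))]
    exact aux_integral_nonpos_le _ (f k s) (hfm k s) ((hfint k s).restrict) _ (hproj (hΓ k))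
  have hsumle : ∑ k : Fin K, ∑ s : 𝒮,
      ∫ ω in memEvent (oracle μ p lam γ) k ∩ {ω | ω.2.1 = s}, f k s ω ∂μ
      ≤ ∑ k : Fin K, ∑ s : 𝒮, ∫ ω in memEvent Γ k ∩ {ω | ω.2.1 = s}, f k s ω ∂μ :=
    Finset.sum_le_sum fun k _ => Finset.sum_le_sum fun s _ => key k s
  linarith

end
end

section
/- Assume Assumption 1 (continuity) and fix β ∈ (0,K). Let (λ*,γ*) be any minimizer of H over Δ and let Γ*_β(x,s) := {k ∈ [K] : p_k(x,s) ≥ λ* + γ*_{k,s}/π_s}. Then for every set-valued classifier Γ ∈ 𝚪, R_{λ*,γ*}(Γ) − R_{λ*,γ*}(Γ*_β) = Σ_{k∈[K]} Σ_{s∈𝒮} E[ 𝟙{k ∈ Γ(X,S) △ Γ*_β(X,S)} · |π_s(p_k(X,S) − λ*) − γ*_{k,s}| | S = s ], where △ denotes the symmetric difference of sets. -/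
open MeasureTheory Set Filter

noncomputable section

section Aux

variable {𝒳 𝒮 : Type*} [MeasurableSpace 𝒳] [MeasurableSpace 𝒮] [MeasurableSingletonClass 𝒮]
  [Fintype 𝒮] {K : ℕ}

lemma meas_proj : Measurable fun ω : 𝒳 × 𝒮 × Fin K => (ω.1, ω.2.1) :=
  measurable_fst.prodMk (measurable_fst.comp measurable_snd)

lemma measSet_Ss (s : 𝒮) : MeasurableSet {ω : 𝒳 × 𝒮 × Fin K | ω.2.1 = s} :=
  (measurable_fst.comp measurable_snd) (measurableSet_singleton s)

lemma measSet_memEvent {Γ : 𝒳 → 𝒮 → Set (Fin K)} (hΓ : IsClassifier Γ) (k : Fin K) :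
    MeasurableSet (memEvent Γ k) :=
  meas_proj (hΓ k)

lemma integrable_bdd {α : Type*} [MeasurableSpace α] (μ : Measure α) [IsFiniteMeasure μ]
    {f : α → ℝ} (hf : Measurable f) (C : ℝ) (h : ∀ x, |f x| ≤ C) : Integrable f μ :=
  (integrable_const C).mono' hf.aestronglyMeasurable (ae_of_all _ h)

lemma lagRisk_eq (μ : Measure (𝒳 × 𝒮 × Fin K)) [IsProbabilityMeasure μ]
    (p : Fin K → 𝒳 → 𝒮 → ℝ)
    (hpmeas : ∀ k, Measurable fun q : 𝒳 × 𝒮 => p k q.1 q.2)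
    (hp01 : ∀ k x s, p k x s ∈ Icc (0:ℝ) 1)
    (hlink : ∀ (k : Fin K) (A : Set (𝒳 × 𝒮)), MeasurableSet A →
      (μ {ω | ω.2.2 = k ∧ (ω.1, ω.2.1) ∈ A}).toReal
        = ∫ ω in {ω : 𝒳 × 𝒮 × Fin K | (ω.1, ω.2.1) ∈ A}, p k ω.1 ω.2.1 ∂μ)
    (β lam : ℝ) (γ : Fin K → 𝒮 → ℝ)
    (Γ : 𝒳 → 𝒮 → Set (Fin K)) (hΓ : IsClassifier Γ) :
    lagRisk μ β lam γ Γ = 1 - lam * β + ∑ k : Fin K, ∑ s : 𝒮,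
      ∫ ω, ((memEvent Γ k ∩ {ω : 𝒳 × 𝒮 × Fin K | ω.2.1 = s}).indicator
        (fun ω => lam + γ k s / probS μ s - p k ω.1 ω.2.1)) ω ∂μ := by
  classical
  have hpm : ∀ k, Measurable fun ω : 𝒳 × 𝒮 × Fin K => p k ω.1 ω.2.1 :=
    fun k => (hpmeas k).comp meas_proj
  have hpint : ∀ k, Integrable (fun ω : 𝒳 × 𝒮 × Fin K => p k ω.1 ω.2.1) μ := by
    intro k
    refine integrable_bdd μ (hpm k) 1 fun ω => ?_
    have h1 := (hp01 k ω.1 ω.2.1).1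
    have h2 := (hp01 k ω.1 ω.2.1).2
    rw [abs_le]; constructor <;> linarith
  have hE : ∀ k, MeasurableSet (memEvent Γ k) := measSet_memEvent hΓ
  have hA : ∀ (k : Fin K) (s : 𝒮),
      MeasurableSet (memEvent Γ k ∩ {ω : 𝒳 × 𝒮 × Fin K | ω.2.1 = s}) :=
    fun k s => (hE k).inter (measSet_Ss s)
  have hUnion : ∀ k, memEvent Γ k = ⋃ s ∈ (Finset.univ : Finset 𝒮),
      memEvent Γ k ∩ {ω : 𝒳 × 𝒮 × Fin K | ω.2.1 = s} := by
    intro k; ext ω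
    simp only [Set.mem_iUnion, Finset.mem_univ, Set.mem_inter_iff, Set.mem_setOf_eq,
      exists_prop, true_and]
    exact ⟨fun h => ⟨ω.2.1, h, rfl⟩, fun ⟨s, h, _⟩ => h⟩
  have hdisj : ∀ k, Set.Pairwise (↑(Finset.univ : Finset 𝒮))
      (Function.onFun Disjoint fun s => memEvent Γ k ∩ {ω : 𝒳 × 𝒮 × Fin K | ω.2.1 = s}) := by
    intro k s _ s' _ hss
    refine Set.disjoint_left.2 fun ω h h' => hss ?_
    rw [← h.2, ← h'.2]
  have hmeassplit : ∀ k, (μ (memEvent Γ k)).toReal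
      = ∑ s : 𝒮, (μ (memEvent Γ k ∩ {ω : 𝒳 × 𝒮 × Fin K | ω.2.1 = s})).toReal := by
    intro k
    have h1 : μ (memEvent Γ k)
        = ∑ s : 𝒮, μ (memEvent Γ k ∩ {ω : 𝒳 × 𝒮 × Fin K | ω.2.1 = s}) := by
      conv_lhs => rw [hUnion k]
      exact measure_biUnion_finset (hdisj k) fun s _ => hA k s
    rw [h1, ENNReal.toReal_sum fun s _ => measure_ne_top μ _]
  have hintsplit : ∀ k, ∫ ω in memEvent Γ k, p k ω.1 ω.2.1 ∂μ
      = ∑ s : 𝒮, ∫ ω in memEvent Γ k ∩ {ω : 𝒳 × 𝒮 × Fin K | ω.2.1 = s}, p k ω.1 ω.2.1 ∂μ := by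
    intro k
    conv_lhs => rw [hUnion k]
    exact integral_biUnion_finset _ (fun s _ => hA k s) (hdisj k)
      (fun s _ => (hpint k).integrableOn)
  have hrisk : risk μ Γ = 1 - ∑ k : Fin K, ∫ ω in memEvent Γ k, p k ω.1 ω.2.1 ∂μ := by
    have hBmeas : ∀ k : Fin K,
        MeasurableSet ({ω : 𝒳 × 𝒮 × Fin K | ω.2.2 = k} ∩ memEvent Γ k) :=
      fun k => (((measurable_snd.comp measurable_snd)
        (measurableSet_singleton k)).inter (hE k))
    have hBdisj : Set.Pairwise (↑(Finset.univ : Finset (Fin K)))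
        (Function.onFun Disjoint fun k => {ω : 𝒳 × 𝒮 × Fin K | ω.2.2 = k} ∩ memEvent Γ k) := by
      intro k _ k' _ hkk
      refine Set.disjoint_left.2 fun ω h h' => hkk ?_
      rw [← h.1, ← h'.1]
    have hset : {ω : 𝒳 × 𝒮 × Fin K | ω.2.2 ∉ Γ ω.1 ω.2.1}
        = (⋃ k ∈ (Finset.univ : Finset (Fin K)),
            ({ω : 𝒳 × 𝒮 × Fin K | ω.2.2 = k} ∩ memEvent Γ k))ᶜ := by
      ext ω
      simp [memEvent]
    have hU : MeasurableSet (⋃ k ∈ (Finset.univ : Finset (Fin K)),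
        ({ω : 𝒳 × 𝒮 × Fin K | ω.2.2 = k} ∩ memEvent Γ k)) :=
      MeasurableSet.biUnion (Finset.univ : Finset (Fin K)).countable_toSet
        fun k _ => hBmeas k
    have hUmeasure : (μ (⋃ k ∈ (Finset.univ : Finset (Fin K)),
        ({ω : 𝒳 × 𝒮 × Fin K | ω.2.2 = k} ∩ memEvent Γ k))).toReal
        = ∑ k : Fin K, ∫ ω in memEvent Γ k, p k ω.1 ω.2.1 ∂μ := by
      rw [measure_biUnion_finset hBdisj fun k _ => hBmeas k,
        ENNReal.toReal_sum fun k _ => measure_ne_top μ _]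
      refine Finset.sum_congr rfl fun k _ => ?_
      have := hlink k {q : 𝒳 × 𝒮 | k ∈ Γ q.1 q.2} (hΓ k)
      exact this
    rw [risk, hset, prob_compl_eq_one_sub hU,
      ENNReal.toReal_sub_of_le prob_le_one ENNReal.one_ne_top, ENNReal.toReal_one,
      hUmeasure]
  have hsize : expSize μ Γ = ∑ k : Fin K, (μ (memEvent Γ k)).toReal := by
    have hpt : ∀ ω : 𝒳 × 𝒮 × Fin K, ((Γ ω.1 ω.2.1).ncard : ℝ)
        = ∑ k : Fin K, (memEvent Γ k).indicator (fun _ => (1:ℝ)) ω := by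
      intro ω
      have h1 : (Γ ω.1 ω.2.1).ncard
          = (Finset.univ.filter (fun k => k ∈ Γ ω.1 ω.2.1)).card := by
        rw [Set.ncard_eq_toFinset_card']
        congr 1
        ext k
        simp
      rw [h1, Finset.card_filter]
      push_cast
      refine Finset.sum_congr rfl fun k _ => ?_
      by_cases hk : k ∈ Γ ω.1 ω.2.1 <;>
        simp [Set.indicator, memEvent, hk]
    rw [expSize]
    rw [show (fun ω : 𝒳 × 𝒮 × Fin K => ((Γ ω.1 ω.2.1).ncard : ℝ))
        = fun ω => ∑ k : Fin K, (memEvent Γ k).indicator (fun _ => (1:ℝ)) ω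
      from funext hpt]
    rw [integral_finset_sum _ fun k _ => (integrable_const (1:ℝ)).indicator (hE k)]
    refine Finset.sum_congr rfl fun k _ => ?_
    rw [integral_indicator_const (1:ℝ) (hE k), smul_eq_mul, mul_one, measureReal_def]
  have hterm : ∀ (k : Fin K) (s : 𝒮),
      ∫ ω, ((memEvent Γ k ∩ {ω : 𝒳 × 𝒮 × Fin K | ω.2.1 = s}).indicator
        (fun ω => lam + γ k s / probS μ s - p k ω.1 ω.2.1)) ω ∂μ
      = (lam + γ k s / probS μ s)
          * (μ (memEvent Γ k ∩ {ω : 𝒳 × 𝒮 × Fin K | ω.2.1 = s})).toReal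
        - ∫ ω in memEvent Γ k ∩ {ω : 𝒳 × 𝒮 × Fin K | ω.2.1 = s}, p k ω.1 ω.2.1 ∂μ := by
    intro k s
    rw [integral_indicator (hA k s),
      integral_sub (integrable_const _) ((hpint k).integrableOn),
      setIntegral_const, smul_eq_mul, mul_comm, measureReal_def]
  rw [lagRisk, hrisk, hsize]
  have hcond : ∀ (k : Fin K) (s : 𝒮), condProb μ (memEvent Γ k) s
      = (μ (memEvent Γ k ∩ {ω : 𝒳 × 𝒮 × Fin K | ω.2.1 = s})).toReal / probS μ s :=
    fun k s => rfl
  simp only [hterm, hmeassplit, hintsplit, hcond]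
  simp only [add_mul, Finset.sum_sub_distrib, Finset.sum_add_distrib, Finset.mul_sum,
    div_mul_eq_mul_div, mul_div_assoc, div_eq_mul_inv, mul_assoc]
  simp only [← Finset.mul_sum, mul_right_comm]
  simp only [fun (s : 𝒮) (a : ℝ) => mul_comm a (probS μ s)⁻¹]
  ring

end Aux

theorem statement5
    {𝒳 𝒮 : Type*} [MeasurableSpace 𝒳] [MeasurableSpace 𝒮] [MeasurableSingletonClass 𝒮]
    [Fintype 𝒮] [Nonempty 𝒮] {K : ℕ} (hK : 2 ≤ K)
    (μ : Measure (𝒳 × 𝒮 × Fin K)) (hμ : IsProbabilityMeasure μ)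
    (hπ : ∀ s : 𝒮, 0 < probS μ s)
    (p : Fin K → 𝒳 → 𝒮 → ℝ)
    (hpmeas : ∀ k, Measurable fun q : 𝒳 × 𝒮 => p k q.1 q.2)
    (hp01 : ∀ k x s, p k x s ∈ Icc (0:ℝ) 1)
    (hpsum : ∀ x s, ∑ k : Fin K, p k x s = 1)
    (hlink : ∀ (k : Fin K) (A : Set (𝒳 × 𝒮)), MeasurableSet A →
      (μ {ω | ω.2.2 = k ∧ (ω.1, ω.2.1) ∈ A}).toReal
        = ∫ ω in {ω : 𝒳 × 𝒮 × Fin K | (ω.1, ω.2.1) ∈ A}, p k ω.1 ω.2.1 ∂μ)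
    (β : ℝ) (hβ0 : 0 < β) (hβK : β < (K : ℝ))
    (hA1 : Assumption1 μ p)
    (lam : ℝ) (γ : Fin K → 𝒮 → ℝ) (hmem : (lam, γ) ∈ Δset K 𝒮)
    (hmin : ∀ r ∈ Δset K 𝒮, Hfun μ p β lam γ ≤ Hfun μ p β r.1 r.2)
 :
    ∀ Γ : 𝒳 → 𝒮 → Set (Fin K), IsClassifier Γ →
      lagRisk μ β lam γ Γ - lagRisk μ β lam γ (oracle μ p lam γ) =
        ∑ k : Fin K, ∑ s : 𝒮,
          condMean μ
            (Set.indicator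
              {ω : 𝒳 × 𝒮 × Fin K | k ∈ symmDiff (Γ ω.1 ω.2.1) (oracle μ p lam γ ω.1 ω.2.1)}
              fun ω => |probS μ s * (p k ω.1 ω.2.1 - lam) - γ k s|) s := by
  intro Γ hΓ
  classical
  have hΓ' : IsClassifier (oracle μ p lam γ) := by
    intro k
    have hset : {q : 𝒳 × 𝒮 | k ∈ oracle μ p lam γ q.1 q.2}
        = {q : 𝒳 × 𝒮 | lam + γ k q.2 / probS μ q.2 ≤ p k q.1 q.2} := rfl
    rw [hset]
    exact measurableSet_le
      (measurable_const.add ((measurable_of_countable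
        (fun s : 𝒮 => γ k s / probS μ s)).comp measurable_snd)) (hpmeas k)
  have hpm : ∀ k, Measurable fun ω : 𝒳 × 𝒮 × Fin K => p k ω.1 ω.2.1 :=
    fun k => (hpmeas k).comp meas_proj
  have hfint : ∀ (k : Fin K) (s : 𝒮),
      Integrable (fun ω : 𝒳 × 𝒮 × Fin K => lam + γ k s / probS μ s - p k ω.1 ω.2.1) μ := by
    intro k s
    refine integrable_bdd μ (measurable_const.sub (hpm k)) (|lam + γ k s / probS μ s| + 1)
      fun ω => ?_
    refine (abs_sub _ _).trans ?_
    have h1 := (hp01 k ω.1 ω.2.1).1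
    have h2 := (hp01 k ω.1 ω.2.1).2
    have : |p k ω.1 ω.2.1| ≤ 1 := by rw [abs_le]; constructor <;> linarith
    linarith
  have hE : ∀ k, MeasurableSet (memEvent Γ k) := measSet_memEvent hΓ
  have hE' : ∀ k, MeasurableSet (memEvent (oracle μ p lam γ) k) := measSet_memEvent hΓ'
  rw [lagRisk_eq μ p hpmeas hp01 hlink β lam γ Γ hΓ,
    lagRisk_eq μ p hpmeas hp01 hlink β lam γ _ hΓ']
  have hsub : ∀ (a b c : ℝ), (1 - lam * β + a) - (1 - lam * β + b) = a - b :=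
    fun a b c => by ring
  rw [hsub _ _ 0, ← Finset.sum_sub_distrib]
  refine Finset.sum_congr rfl fun k _ => ?_
  rw [← Finset.sum_sub_distrib]
  refine Finset.sum_congr rfl fun s _ => ?_
  rw [← integral_sub
    ((hfint k s).indicator ((hE k).inter (measSet_Ss s)))
    ((hfint k s).indicator ((hE' k).inter (measSet_Ss s)))]
  rw [condMean, ← integral_indicator (measSet_Ss s), ← integral_div]
  refine integral_congr_ae (ae_of_all _ fun ω => ?_)
  by_cases hs : ω.2.1 = s
  · subst hs
    simp only [Set.indicator_apply, Set.mem_inter_iff, Set.mem_setOf_eq, memEvent,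
      eq_self_iff_true, and_true, if_true]
    have habs : |probS μ ω.2.1 * (p k ω.1 ω.2.1 - lam) - γ k ω.2.1| / probS μ ω.2.1
        = |lam + γ k ω.2.1 / probS μ ω.2.1 - p k ω.1 ω.2.1| := by
      have hπs := hπ ω.2.1
      have heq : lam + γ k ω.2.1 / probS μ ω.2.1 - p k ω.1 ω.2.1
          = -((probS μ ω.2.1 * (p k ω.1 ω.2.1 - lam) - γ k ω.2.1) / probS μ ω.2.1) := by
        field_simp
        ring
      rw [heq, abs_neg, abs_div, abs_of_pos hπs]
    by_cases h1 : k ∈ Γ ω.1 ω.2.1 <;> by_cases h2 : k ∈ oracle μ p lam γ ω.1 ω.2.1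
    · have hD : k ∉ symmDiff (Γ ω.1 ω.2.1) (oracle μ p lam γ ω.1 ω.2.1) := by
        rw [Set.mem_symmDiff]; push_neg; exact ⟨fun _ => h2, fun _ => h1⟩
      rw [if_pos h1, if_pos h2, if_neg hD]
      simp
    · have hD : k ∈ symmDiff (Γ ω.1 ω.2.1) (oracle μ p lam γ ω.1 ω.2.1) :=
        Set.mem_symmDiff.2 (Or.inl ⟨h1, h2⟩)
      have hlt : ¬ (lam + γ k ω.2.1 / probS μ ω.2.1 ≤ p k ω.1 ω.2.1) := h2
      rw [if_pos h1, if_neg h2, if_pos hD, habs,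
        abs_of_pos (by linarith [lt_of_not_ge hlt])]
      ring
    · have hD : k ∈ symmDiff (Γ ω.1 ω.2.1) (oracle μ p lam γ ω.1 ω.2.1) :=
        Set.mem_symmDiff.2 (Or.inr ⟨h2, h1⟩)
      have hle : lam + γ k ω.2.1 / probS μ ω.2.1 ≤ p k ω.1 ω.2.1 := h2
      rw [if_neg h1, if_pos h2, if_pos hD, habs, abs_of_nonpos (by linarith)]
      ring
    · have hD : k ∉ symmDiff (Γ ω.1 ω.2.1) (oracle μ p lam γ ω.1 ω.2.1) := by
        rw [Set.mem_symmDiff]; push_neg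
        exact ⟨fun h => absurd h h1, fun h => absurd h h2⟩
      rw [if_neg h1, if_neg h2, if_neg hD]
      simp
  · simp only [Set.indicator_apply, Set.mem_inter_iff, Set.mem_setOf_eq]
    rw [if_neg (fun h => hs h.2), if_neg (fun h => hs h.2), if_neg hs]
    simp
end
end
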